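/- arXiv:1005.1375 — 2 statements merged into one kernel-verified Lean document; each statement's English description precedes it below -/
import Mathlib

section
/- Let ⟨T,p⟩ be a star shaped domain in ℝ² with a partition into smaller star shaped domains ⟨T₁,p₁⟩,…,⟨Tₙ,pₙ⟩ (pairwise disjoint interiors, union equal to T). For r ∈ (0,1) let Tᵢ^r denote the contraction of Tᵢ by ratio r around pᵢ. Then there exist r ∈ (0,1) and a point q ∈ int(T) \ ⋃ᵢ Tᵢ^r such that for every i ∈ {1,…,n} and every x ∈ Tᵢ^r, the segment {tq+(1−t)x : t∈[0,1]} is contained in T. -/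
open MeasureTheory Metric Set Real

/-- A star shaped domain `⟨T, p⟩` in the plane (identified with `ℂ`). -/
def StarShaped (T : Set ℂ) (p : ℂ) : Prop :=
  IsCompact T ∧ p ∈ interior T ∧ ∀ x ∈ T, segment ℝ p x ⊆ T

def Contraction (T : Set ℂ) (p : ℂ) (r : ℝ) : Set ℂ :=
  (fun x : ℂ => p + r • (x - p)) '' T

/-!
Every segment from `p` to the centre `pᵢ` of a tile lies in the interior of `T`, because
homotheties about `p` with positive ratio are open maps sending `T` into itself. By compactness a
uniform neighbourhood of that segment still lies in `int T`, and as this neighbourhood is convex,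
any point `q` close to `p` sees through `T` every point close to `pᵢ`. Choose such a `q` distinct
from all the `pᵢ`; contracting the tiles by a small enough ratio `r` brings each `Tᵢʳ` close to `pᵢ`
while keeping it away from `q`.
-/

open Filter Topology AffineMap

section

variable {E : Type*} [NormedAddCommGroup E] [NormedSpace ℝ E]

theorem StarConvex.segment_subset_interior {T : Set E} {p x : E} (hT : StarConvex ℝ p T)
    (hp : p ∈ interior T) (hx : x ∈ interior T) : segment ℝ p x ⊆ interior T := by
  rw [segment_eq_image_lineMap]
  rintro _ ⟨t, ⟨ht0, ht1⟩, rfl⟩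
  rcases ht0.eq_or_lt with rfl | ht0
  · simpa using hp
  have hmaps : homothety p t '' T ⊆ T := by
    rintro _ ⟨y, hy, rfl⟩
    rw [homothety_eq_lineMap]
    exact starConvex_iff_segment_subset.1 hT hy
      (segment_eq_image_lineMap ℝ p y ▸ mem_image_of_mem _ ⟨ht0.le, ht1⟩)
  rw [← homothety_eq_lineMap]
  exact interior_mono hmaps
    ((homothety_isOpenMap p t ht0.ne').image_interior_subset T (mem_image_of_mem _ hx))

theorem eventually_segment_subset_of_segment_subset {U : Set E} {p x : E} (hU : IsOpen U)
    (h : segment ℝ p x ⊆ U) :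
    ∀ᶠ δ in 𝓝[>] (0 : ℝ), ∀ q ∈ ball p δ, ∀ y ∈ ball x δ, segment ℝ q y ⊆ U := by
  obtain ⟨δ₀, hδ₀, hsub⟩ := ((segment_eq_image_lineMap ℝ p x).symm ▸
    isCompact_Icc.image lineMap_continuous).exists_thickening_subset_open hU h
  filter_upwards [Ioo_mem_nhdsGT hδ₀] with δ hδ q hq y hy
  have hconvex := (convex_segment p x).thickening δ₀
  refine (hconvex.segment_subset ?_ ?_).trans hsub
  · exact ball_subset_thickening (left_mem_segment ℝ p x) δ₀ (ball_subset_ball hδ.2.le hq)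
  · exact ball_subset_thickening (right_mem_segment ℝ p x) δ₀ (ball_subset_ball hδ.2.le hy)

end

theorem eventually_contraction_subset_ball {K : Set ℂ} (hK : Bornology.IsBounded K) (c : ℂ)
    {ε : ℝ} (hε : 0 < ε) : ∀ᶠ r in 𝓝 (0 : ℝ), Contraction K c r ⊆ ball c ε := by
  obtain ⟨D, hD, hKD⟩ := hK.subset_closedBall_lt 0 c
  filter_upwards [ball_mem_nhds (0 : ℝ) (div_pos hε hD)] with r hr
  rintro _ ⟨x, hx, rfl⟩
  rw [mem_ball_zero_iff, Real.norm_eq_abs, lt_div_iff₀ hD] at hr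
  rw [mem_ball, dist_eq_norm, add_sub_cancel_left, norm_smul, Real.norm_eq_abs]
  calc |r| * ‖x - c‖ ≤ |r| * D := by
        gcongr
        exact mem_closedBall_iff_norm.1 (hKD hx)
    _ < ε := hr

theorem special_point_exists_general (T : Set ℂ) (p : ℂ) (hT : StarShaped T p)
    (n : ℕ) (Ts : Fin n → Set ℂ) (ps : Fin n → ℂ)
    (hTs : ∀ i, StarShaped (Ts i) (ps i))
    (hcover : (⋃ i, Ts i) = T) :
    ∃ r ∈ Set.Ioo (0 : ℝ) 1, ∃ q,
      q ∈ interior T \ (⋃ i, Contraction (Ts i) (ps i) r) ∧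
      ∀ i, ∀ x ∈ Contraction (Ts i) (ps i) r, segment ℝ q x ⊆ T := by
  obtain ⟨-, hp, hstar⟩ := hT
  have hps : ∀ i, ps i ∈ interior T := fun i =>
    interior_mono (hcover ▸ subset_iUnion Ts i) (hTs i).2.1
  obtain ⟨δ, hvis, hδ⟩ := ((eventually_all.2 fun i =>
    eventually_segment_subset_of_segment_subset isOpen_interior
      ((starConvex_iff_segment_subset.2 hstar).segment_subset_interior hp (hps i))).and
    self_mem_nhdsWithin).exists
  obtain ⟨q, ⟨hqp, hqT⟩, hq⟩ : ((ball p δ ∩ interior T) \ range ps).Nonempty :=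
    ((finite_range ps).countable.dense_compl ℝ).inter_open_nonempty _
      (isOpen_ball.inter isOpen_interior) ⟨p, mem_ball_self hδ, hp⟩
  have hqps : ∀ i, 0 < dist q (ps i) := fun i => dist_pos.2 fun h => hq ⟨i, h.symm⟩
  obtain ⟨r, hr, hsmall⟩ := (Eventually.and (Ioo_mem_nhdsGT one_pos) (nhdsWithin_le_nhds
    (eventually_all.2 fun i =>
      eventually_contraction_subset_ball (hTs i).1.isBounded (ps i) (lt_min hδ (hqps i))))).exists
  refine ⟨r, hr, q, ⟨hqT, ?_⟩, fun i x hx => ?_⟩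
  · simp only [mem_iUnion, not_exists]
    exact fun i hqi => lt_irrefl _ ((mem_ball.1 (hsmall i hqi)).trans_le (min_le_right _ _))
  · exact (hvis i q hqp x (ball_subset_ball (min_le_left _ _) (hsmall i hx))).trans interior_subset

/-- **The special point `q`.** If a star shaped domain `⟨T,p⟩` is partitioned into star
shaped domains `⟨T₁,p₁⟩, …, ⟨Tₙ,pₙ⟩`, then there are `r ∈ (0,1)` and
`q ∈ int(T) \ ⋃ᵢ Tᵢʳ` such that `q` sees every point of every contracted tile `Tᵢʳ`
through `T`. -/
theorem special_point_exists (T : Set ℂ) (p : ℂ) (hT : StarShaped T p)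
    (n : ℕ) (Ts : Fin n → Set ℂ) (ps : Fin n → ℂ)
    (hTs : ∀ i, StarShaped (Ts i) (ps i))
    (hdisj : ∀ i j, i ≠ j → Disjoint (interior (Ts i)) (interior (Ts j)))
    (hcover : (⋃ i, Ts i) = T) :
    ∃ r ∈ Set.Ioo (0 : ℝ) 1, ∃ q,
      q ∈ interior T \ (⋃ i, Contraction (Ts i) (ps i) r) ∧
      ∀ i, ∀ x ∈ Contraction (Ts i) (ps i) r, segment ℝ q x ⊆ T :=
  special_point_exists_general T p hT n Ts ps hTs hcover
end

section
/- Let ⟨T,p⟩ be a star shaped domain in ℝ², and for ε > 0 set T_{1−ε} = {x ∈ T : d(x, ∂T) ≥ ε}. Then for every ε > 0 there exists δ > 0 such that for every q ∈ B(p,δ) and every y ∈ T_{1−ε}, the segment {tq+(1−t)y : t∈[0,1]} is contained in T. -/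
open MeasureTheory Metric Set Real

/-!
Points at distance at least `ε` from `∂T` carry a whole ball `B(y, ε)` inside `T`. Shrinking
that ball towards `p` keeps it in `T`, so the point `t y + (1 - t) p` has the ball of radius
`t ε` around it in `T`, and moving the apex from `p` to `q` moves it only by `(1 - t) |q - p|`.
When that shift is too large, `t < |q - p| / ε` is small and the point is close to `p`, hence
in a fixed ball around `p` contained in `T`.
-/

open AffineMap

theorem IsPreconnected.subset_of_disjoint_frontier {X : Type*} [TopologicalSpace X]
    {s t : Set X} (hs : IsPreconnected s) (hst : (s ∩ t).Nonempty)
    (hfr : Disjoint s (frontier t)) : s ⊆ t := by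
  have hcover : s ⊆ interior t ∪ interior tᶜ :=
    compl_frontier_eq_union_interior (s := t) ▸ hfr.subset_compl_right
  obtain ⟨x, hxs, hxt⟩ := hst
  have hx : x ∈ interior t := by
    simpa [interior_compl, hxt, subset_closure hxt] using hcover hxs
  exact (hs.subset_left_of_subset_union isOpen_interior isOpen_interior
    (disjoint_compl_right.mono interior_subset interior_subset) hcover ⟨x, hxs, hx⟩).trans
    interior_subset

section NormedSpace

variable {E : Type*} [NormedAddCommGroup E] [NormedSpace ℝ E]

theorem ball_infDist_frontier_subset {T : Set E} {y : E} (hy : y ∈ T) :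
    ball y (infDist y (frontier T)) ⊆ T := by
  rcases (infDist_nonneg (x := y) (s := frontier T)).eq_or_lt with h | h
  · simp [← h]
  · exact (convex_ball _ _).isPreconnected.subset_of_disjoint_frontier
      ⟨y, mem_ball_self h, hy⟩ disjoint_ball_infDist

theorem StarConvex.ball_lineMap_subset {T : Set E} {p y : E} {ε t : ℝ}
    (hT : StarConvex ℝ p T) (hball : ball y ε ⊆ T) (ht₀ : 0 ≤ t) (ht₁ : t ≤ 1) :
    ball (lineMap p y t) (t * ε) ⊆ T := by
  intro z hz
  have ht : 0 < t := by
    rcases ht₀.eq_or_lt with rfl | h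
    · simp at hz
    · exact h
  set x := p + t⁻¹ • (z - p)
  have hzx : z = p + t • (x - p) := by simp [x, smul_smul, ht.ne']
  have hx : x ∈ ball y ε := by
    have : x - y = t⁻¹ • (z - lineMap p y t) := by
      simp only [x, lineMap_apply_module', smul_sub, smul_add, smul_smul, inv_mul_cancel₀ ht.ne',
        one_smul]
      abel
    rw [mem_ball, dist_eq_norm, this, norm_smul, Real.norm_of_nonneg (inv_nonneg.mpr ht₀),
      ← dist_eq_norm, inv_mul_lt_iff₀ ht]
    exact hz
  exact hzx ▸ hT.add_smul_sub_mem (hball hx) ht₀ ht₁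

theorem dist_lineMap_lineMap_of_right_eq (p q y : E) (t : ℝ) :
    dist (lineMap p y t) (lineMap q y t) = |1 - t| * dist p q := by
  rw [dist_eq_norm, ← vsub_eq_sub, lineMap_vsub_lineMap, vsub_eq_sub, vsub_eq_sub, sub_self,
    lineMap_apply_module, smul_zero, add_zero, norm_smul, Real.norm_eq_abs, dist_eq_norm]

end NormedSpace

/-- For a star shaped domain `⟨T,p⟩` and any `ε > 0` there is `δ > 0` such that every point
`q ∈ B(p,δ)` sees every point of `T₁₋ε = {x ∈ T : d(x,∂T) ≥ ε}` through `T`. -/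
theorem points_near_center_see_deep_points (T : Set ℂ) (p : ℂ) (hT : StarShaped T p) :
    ∀ ε > (0 : ℝ), ∃ δ > (0 : ℝ), ∀ q ∈ ball p δ, ∀ y ∈ T,
      ε ≤ infDist y (frontier T) → segment ℝ q y ⊆ T := by
  obtain ⟨hcpt, hpint, hstar⟩ := hT
  intro ε hε
  obtain ⟨r, hr, hpr⟩ := Metric.mem_nhds_iff.mp (mem_interior_iff_mem_nhds.mp hpint)
  obtain ⟨R, hR, hTR⟩ := hcpt.isBounded.subset_closedBall_lt 0 p
  set δ := r * ε / (ε + R)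
  have hδ : δ * (ε + R) = r * ε := div_mul_cancel₀ _ (by positivity)
  refine ⟨δ, by positivity, fun q hq y hy hyε => ?_⟩
  have hball : ball y ε ⊆ T := (ball_subset_ball hyε).trans (ball_infDist_frontier_subset hy)
  rw [segment_eq_image_lineMap]
  rintro _ ⟨t, ⟨ht₀, ht₁⟩, rfl⟩
  have hshift : dist (lineMap q y t) (lineMap p y t) = (1 - t) * dist q p := by
    rw [dist_lineMap_lineMap_of_right_eq, abs_of_nonneg (sub_nonneg.mpr ht₁)]
  by_cases hcone : (1 - t) * dist q p < t * ε
  · exact (starConvex_iff_segment_subset.mpr hstar).ball_lineMap_subset hball ht₀ ht₁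
      (mem_ball.mpr (hshift ▸ hcone))
  · have hsmall : (1 - t) * dist q p < δ :=
      (mul_le_of_le_one_left dist_nonneg (by linarith)).trans_lt hq
    have htε : t * ε < δ := (not_lt.mp hcone).trans_lt hsmall
    have hyR : t * dist y p ≤ t * R := mul_le_mul_of_nonneg_left (hTR hy) ht₀
    refine hpr (mem_ball.mpr ?_)
    calc dist (lineMap q y t) p
        ≤ dist (lineMap q y t) (lineMap p y t) + dist (lineMap p y t) p := dist_triangle _ _ _
      _ = (1 - t) * dist q p + t * dist y p := by
        rw [hshift, dist_lineMap_left, Real.norm_of_nonneg ht₀, dist_comm p y]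
      _ < r := by
        refine lt_of_mul_lt_mul_right ?_ hε.le
        nlinarith [mul_lt_mul_of_pos_right htε hR, mul_lt_mul_of_pos_right hsmall hε]
end
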